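/- For all real numbers a < 0, b ∈ ℝ and t > 0, one has e^{(a+ib)t} = (1/π) ∫_{−∞}^{∞} e^{itx} · (−a)/(a² + (b−x)²) dx, the integral being absolutely convergent. -/

import Mathlib

/-!
For `c > 0` the function `e^{-c|s|}` is integrable with Fourier transform
`2c / (c² + (2πξ)²)`, itself integrable, so Fourier inversion at `t` gives
`∫ e^{itu} c / (c² + u²) du = π e^{-c|t|}`. Translating the kernel by `b` multiplies the
integral by `e^{itb}`; with `c = -a` and `t > 0` this is `π e^{(a+ib)t}`.
-/

open MeasureTheory Set Complex Real FourierTransform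

lemma integrable_exp_neg_mul_abs {c : ℝ} (hc : 0 < c) :
    Integrable fun s : ℝ => rexp (-(c * |s|)) := by
  have hIic : IntegrableOn (fun s : ℝ => rexp (-(c * |s|))) (Iic 0) :=
    (integrableOn_exp_mul_Iic hc 0).congr_fun (fun s (hs : s ≤ 0) => by
      simp [abs_of_nonpos hs]) measurableSet_Iic
  have hIoi : IntegrableOn (fun s : ℝ => rexp (-(c * |s|))) (Ioi 0) :=
    (integrableOn_exp_mul_Ioi (neg_lt_zero.2 hc) 0).congr_fun (fun s (hs : 0 < s) => by
      simp [abs_of_pos hs]) measurableSet_Ioi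
  simpa [Iic_union_Ioi] using hIic.union hIoi

lemma MeasureTheory.Integrable.cexp_I_mul_mul {f : ℝ → ℂ} (hf : Integrable f) (w : ℝ) :
    Integrable fun x : ℝ => cexp (I * w * x) * f x :=
  hf.bdd_mul (c := 1) (by fun_prop) (.of_forall fun x => by
    rw [norm_exp]; simp)

lemma integral_cexp_I_mul_mul_exp_neg_mul_abs {c : ℝ} (hc : 0 < c) (w : ℝ) :
    ∫ s : ℝ, cexp (I * w * s) * rexp (-(c * |s|)) = 2 * c / (c ^ 2 + w ^ 2) := by
  have hint : Integrable fun s : ℝ => cexp (I * w * s) * rexp (-(c * |s|)) :=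
    (integrable_exp_neg_mul_abs hc).ofReal.cexp_I_mul_mul w
  have hIoi : ∫ s in Ioi (0 : ℝ), cexp (I * w * s) * rexp (-(c * |s|)) =
      1 / (c - I * w) := by
    rw [setIntegral_congr_fun measurableSet_Ioi (g := fun s : ℝ => cexp ((I * w - c) * s))
      (fun s (hs : 0 < s) => by
        simp only [abs_of_pos hs, ofReal_exp, ← Complex.exp_add]; push_cast; ring_nf),
      integral_exp_mul_complex_Ioi (by simpa using hc)]
    simp only [ofReal_zero, mul_zero, Complex.exp_zero]
    rw [neg_div, ← div_neg, neg_sub]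
  have hIic : ∫ s in Iic (0 : ℝ), cexp (I * w * s) * rexp (-(c * |s|)) =
      1 / (c + I * w) := by
    rw [setIntegral_congr_fun measurableSet_Iic (g := fun s : ℝ => cexp ((I * w + c) * s))
      (fun s (hs : s ≤ 0) => by
        simp only [abs_of_nonpos hs, ofReal_exp, ← Complex.exp_add]; push_cast; ring_nf),
      integral_exp_mul_complex_Iic (by simpa using hc)]
    simp only [ofReal_zero, mul_zero, Complex.exp_zero]
    rw [add_comm]
  have hp : (c : ℂ) - I * w ≠ 0 := fun h => by simpa [hc.ne'] using congrArg re h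
  have hm : (c : ℂ) + I * w ≠ 0 := fun h => by simpa [hc.ne'] using congrArg re h
  rw [← intervalIntegral.integral_Iic_add_Ioi (b := 0) hint.integrableOn hint.integrableOn,
    hIic, hIoi]
  have hq : (c : ℂ) ^ 2 + w ^ 2 ≠ 0 := by exact_mod_cast (by positivity : c ^ 2 + w ^ 2 ≠ 0)
  rw [div_add_div _ _ hm hp, div_eq_div_iff (mul_ne_zero hm hp) hq]
  linear_combination 2 * c * w ^ 2 * I_sq

lemma integrable_div_sq_add_sq (c : ℝ) : Integrable fun x : ℝ => c / (c ^ 2 + x ^ 2) := by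
  rcases eq_or_ne c 0 with rfl | hc
  · simp
  refine ((integrable_inv_one_add_sq.comp_div hc).const_mul c⁻¹).congr (.of_forall fun x => ?_)
  field_simp

lemma fourier_exp_neg_mul_abs {c : ℝ} (hc : 0 < c) (ξ : ℝ) :
    𝓕 (fun s : ℝ => (rexp (-(c * |s|)) : ℂ)) ξ =
      ((2 * c / (c ^ 2 + (2 * π * ξ) ^ 2) : ℝ) : ℂ) := by
  have h := integral_cexp_I_mul_mul_exp_neg_mul_abs hc (-(2 * π * ξ))
  push_cast at h ⊢
  rw [neg_sq] at h
  rw [Real.fourier_real_eq_integral_exp_smul, ← h]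
  congr! 3 with s
  push_cast
  ring_nf

theorem integral_cexp_I_mul_mul_div_sq_add_sq {c : ℝ} (hc : 0 < c) (t : ℝ) :
    ∫ u : ℝ, cexp (I * t * u) * ((c / (c ^ 2 + u ^ 2) : ℝ) : ℂ) =
      π * rexp (-(c * |t|)) := by
  set g : ℝ → ℂ := fun s => rexp (-(c * |s|))
  have hFg : 𝓕 g = fun ξ => 2 * ((c / (c ^ 2 + (2 * π * ξ) ^ 2) : ℝ) : ℂ) :=
    funext fun ξ => by rw [fourier_exp_neg_mul_abs hc]; push_cast; ring
  have inversion : 𝓕⁻ (𝓕 g) t = g t := by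
    refine (integrable_exp_neg_mul_abs hc).ofReal.fourierInv_fourier_eq ?_
      (by fun_prop : Continuous g).continuousAt
    rw [hFg]
    exact (((integrable_div_sq_add_sq c).comp_mul_left' (by positivity)).ofReal).const_mul 2
  set F : ℝ → ℂ := fun u => 2 * (cexp (I * t * u) * ((c / (c ^ 2 + u ^ 2) : ℝ) : ℂ))
  have rescale : 𝓕⁻ (𝓕 g) t = ∫ ξ, F (2 * π * ξ) := by
    rw [Real.fourierInv_eq', hFg]
    refine integral_congr_ae (.of_forall fun ξ => ?_)
    simp only [F, smul_eq_mul, Real.inner_apply]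
    push_cast
    ring_nf
  rw [rescale, Measure.integral_comp_mul_left, integral_const_mul] at inversion
  rw [abs_of_pos (by positivity), Complex.real_smul] at inversion
  generalize ∫ u : ℝ, cexp (I * t * u) * ((c / (c ^ 2 + u ^ 2) : ℝ) : ℂ) = J
    at inversion ⊢
  simp only [g] at inversion
  rw [← inversion]
  push_cast
  field_simp

lemma integral_cexp_I_mul_mul_comp_sub (f : ℝ → ℂ) (t b : ℝ) :
    ∫ x : ℝ, cexp (I * t * x) * f (x - b) =
      cexp (I * t * b) * ∫ u : ℝ, cexp (I * t * u) * f u := by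
  rw [← integral_add_right_eq_self _ b, ← integral_const_mul]
  refine integral_congr_ae (.of_forall fun u => ?_)
  simp only [add_sub_cancel_right, ofReal_add, mul_add, Complex.exp_add]
  ring

theorem exp_eq_poisson_kernel_integral (a b t : ℝ) (ha : a < 0) (ht : 0 < t) :
    Integrable (fun x : ℝ =>
      Complex.exp (Complex.I * (t : ℂ) * (x : ℂ)) *
        (((-a) / (a ^ 2 + (b - x) ^ 2) : ℝ) : ℂ)) ∧
    Complex.exp (((a : ℂ) + (b : ℂ) * Complex.I) * (t : ℂ)) =
      (1 / (Real.pi : ℂ)) *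
        ∫ x : ℝ, Complex.exp (Complex.I * (t : ℂ) * (x : ℂ)) *
          (((-a) / (a ^ 2 + (b - x) ^ 2) : ℝ) : ℂ) := by
  have kernel_eq (x : ℝ) : (-a) / (a ^ 2 + (b - x) ^ 2) = (-a) / ((-a) ^ 2 + (x - b) ^ 2) := by
    ring
  have shift :=
    integral_cexp_I_mul_mul_comp_sub (fun u => ((-a / ((-a) ^ 2 + u ^ 2) : ℝ) : ℂ)) t b
  simp_rw [kernel_eq]
  refine ⟨((integrable_div_sq_add_sq (-a)).comp_sub_right b).ofReal.cexp_I_mul_mul t, ?_⟩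
  rw [shift, integral_cexp_I_mul_mul_div_sq_add_sq (neg_pos.2 ha), abs_of_pos ht]
  have hπ : (π : ℂ) ≠ 0 := by exact_mod_cast Real.pi_ne_zero
  rw [ofReal_exp, one_div, mul_left_comm _ (π : ℂ), inv_mul_cancel_left₀ hπ,
    ← Complex.exp_add]
  congr 1
  push_cast
  ring
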